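/- Let (E, ‖·‖) be a complete L^∞-normed module whose unit ball U(E) = {x ∈ E : ‖x‖ ≤ 1} has the countable concatenation property, and let E_0 be its L^0-extension random normed module. Then E = L^∞(E_0) := {x ∈ E_0 : ‖x‖_0 ∈ L^∞}. -/

import Mathlib

open MeasureTheory Filter
noncomputable section

variable {Ω : Type} [MeasurableSpace Ω] {μ : Measure Ω}

/-- `L⁰(𝓕)`: equivalence classes of random variables, as a commutative ring. -/
instance : NatCast (Ω →ₘ[μ] ℝ) := ⟨fun n => AEEqFun.const Ω (n : ℝ)⟩
instance : IntCast (Ω →ₘ[μ] ℝ) := ⟨fun n => AEEqFun.const Ω (n : ℝ)⟩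
instance : CommRing (Ω →ₘ[μ] ℝ) :=
  AEEqFun.toGerm_injective.commRing AEEqFun.toGerm AEEqFun.zero_toGerm AEEqFun.one_toGerm
    AEEqFun.add_toGerm AEEqFun.mul_toGerm AEEqFun.neg_toGerm AEEqFun.sub_toGerm
    (fun _ _ => AEEqFun.smul_toGerm _ _) (fun _ _ => AEEqFun.smul_toGerm _ _)
    AEEqFun.pow_toGerm (fun _ => rfl) (fun _ => rfl)

/-- `L^∞(𝓕)`: the subring of essentially bounded random variables. -/
def Linf (μ : Measure Ω) : Subring (Ω →ₘ[μ] ℝ) where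
  carrier := {ξ | ∃ c : ℝ, ∀ᵐ ω ∂μ, |ξ ω| ≤ c}
  zero_mem' := ⟨0, by filter_upwards [AEEqFun.coeFn_zero (β := ℝ) (μ := μ)] with ω h; simp [h]⟩
  one_mem' := ⟨1, by filter_upwards [AEEqFun.coeFn_one (β := ℝ) (μ := μ)] with ω h; simp [h]⟩
  add_mem' := by
    rintro a b ⟨c, hc⟩ ⟨d, hd⟩
    exact ⟨c + d, by
      filter_upwards [AEEqFun.coeFn_add a b, hc, hd] with ω h1 h2 h3
      calc |(a + b) ω| = |a ω + b ω| := by rw [h1]; rfl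
        _ ≤ |a ω| + |b ω| := abs_add_le _ _
        _ ≤ c + d := add_le_add h2 h3⟩
  mul_mem' := by
    rintro a b ⟨c, hc⟩ ⟨d, hd⟩
    exact ⟨|c| * |d|, by
      filter_upwards [AEEqFun.coeFn_mul a b, hc, hd] with ω h1 h2 h3
      calc |(a * b) ω| = |a ω * b ω| := by rw [h1]; rfl
        _ = |a ω| * |b ω| := abs_mul _ _
        _ ≤ |c| * |d| :=
            mul_le_mul (h2.trans (le_abs_self c)) (h3.trans (le_abs_self d))
              (abs_nonneg _) (abs_nonneg _)⟩
  neg_mem' := by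
    rintro a ⟨c, hc⟩
    exact ⟨c, by
      filter_upwards [AEEqFun.coeFn_neg a, hc] with ω h1 h2
      calc |(-a) ω| = |-(a ω)| := by rw [h1]; rfl
        _ = |a ω| := abs_neg _
        _ ≤ c := h2⟩

/-- the constant `c`, as an element of `L^∞`. -/
def LinfConst (μ : Measure Ω) (c : ℝ) : Linf μ :=
  ⟨AEEqFun.const Ω c, |c|, by
    filter_upwards [AEEqFun.coeFn_const (α := Ω) (μ := μ) c] with ω h
    simp [h, Function.const]⟩

/-- the equivalence class `Ĩ_A` of the indicator function of a set `A`. -/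
def indL0 (μ : Measure Ω) (A : Set Ω) (hA : MeasurableSet A) : Ω →ₘ[μ] ℝ :=
  AEEqFun.mk (A.indicator (1 : Ω → ℝ)) ((measurable_const.indicator hA).aestronglyMeasurable)

/-- a countable measurable partition of `Ω`. -/
structure MPartition (Ω : Type) [MeasurableSpace Ω] where
  A : ℕ → Set Ω
  meas : ∀ k, MeasurableSet (A k)
  disj : ∀ m k, m ≠ k → A m ∩ A k = ∅
  cover : (⋃ k, A k) = Set.univ

/-- `Ĩ_{A_k}` for a member of a countable measurable partition. -/
def MPartition.ind (P : MPartition Ω) (μ : Measure Ω) (k : ℕ) : Ω →ₘ[μ] ℝ :=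
  indL0 μ (P.A k) (P.meas k)

/-- `‖·‖` is an `L⁰`-norm making the `L⁰`-module `S` a random normed module. -/
structure IsRNNorm (μ : Measure Ω) {S : Type} [AddCommGroup S]
    [Module (Ω →ₘ[μ] ℝ) S] (n : S → Ω →ₘ[μ] ℝ) : Prop where
  nonneg : ∀ x, 0 ≤ n x
  eq_zero_iff : ∀ x, n x = 0 ↔ x = 0
  norm_smul : ∀ (ξ : Ω →ₘ[μ] ℝ) (x : S), n (ξ • x) = |ξ| * n x
  norm_add_le : ∀ x y, n (x + y) ≤ n x + n y

/-- `‖·‖` is an `L^∞`-norm making the `L^∞`-module `E` an `L^∞`-normed module. -/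
structure IsLinfNorm (μ : Measure Ω) {E : Type} [AddCommGroup E]
    [Module (Linf μ) E] (n : E → Ω →ₘ[μ] ℝ) : Prop where
  nonneg : ∀ x, 0 ≤ n x
  mem_Linf : ∀ x, n x ∈ Linf μ
  eq_zero_iff : ∀ x, n x = 0 ↔ x = 0
  norm_smul : ∀ (ξ : Linf μ) (x : E), n (ξ • x) = |(ξ : Ω →ₘ[μ] ℝ)| * n x
  norm_add_le : ∀ x y, n (x + y) ≤ n x + n y

/-- the metric `d(x,y) = E[1 ∧ ‖x-y‖]` associated to an `L⁰`- (or `L^∞`-) norm. -/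
def ndist {S : Type} [AddCommGroup S] (μ : Measure Ω) (n : S → Ω →ₘ[μ] ℝ) (x y : S) : ℝ :=
  ∫ ω, min 1 |n (x - y) ω| ∂μ

/-- the distance of convergence in probability on `L⁰`. -/
def dProb (μ : Measure Ω) (ξ η : Ω →ₘ[μ] ℝ) : ℝ := ∫ ω, min 1 |ξ ω - η ω| ∂μ

/-- Cauchy property of a sequence with respect to a distance function. -/
def dCauchy {S : Type} (d : S → S → ℝ) (x : ℕ → S) : Prop :=
  ∀ ε > (0:ℝ), ∃ N : ℕ, ∀ m ≥ N, ∀ k ≥ N, d (x m) (x k) < ε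

/-- convergence of a sequence with respect to a distance function. -/
def dTendsto {S : Type} (d : S → S → ℝ) (x : ℕ → S) (y : S) : Prop :=
  Tendsto (fun k => d (x k) y) atTop (nhds 0)

/-- completeness with respect to a distance function. -/
def dComplete {S : Type} (d : S → S → ℝ) : Prop :=
  ∀ x : ℕ → S, dCauchy d x → ∃ y, dTendsto d x y

/-- a bundled complete-or-not random normed module over `L⁰(𝓕)`. -/
structure RNMod (Ω : Type) [MeasurableSpace Ω] (μ : Measure Ω) where
  carrier : Type
  acg : AddCommGroup carrier
  mod : @Module (Ω →ₘ[μ] ℝ) carrier _ acg.toAddCommMonoid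
  rnorm : carrier → Ω →ₘ[μ] ℝ
  isRNNorm : IsRNNorm μ rnorm

attribute [instance] RNMod.acg RNMod.mod

/-- the metric of the `(ε,λ)`-topology of a random normed module. -/
def RNMod.dist (S : RNMod Ω μ) : S.carrier → S.carrier → ℝ := ndist μ S.rnorm

/-- completeness of a random normed module in the `(ε,λ)`-topology. -/
def RNMod.Complete (S : RNMod Ω μ) : Prop := dComplete S.dist

/-- the essential supremum `‖ξ‖_∞` of (the absolute value of) a random variable. -/
def NinfV (μ : Measure Ω) (ξ : Ω →ₘ[μ] ℝ) : ℝ := essSup (fun ω => |ξ ω|) μ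

/-- `T` is an `L^∞`-module homomorphism from `E` into (the `L^∞`-module underlying) `S`. -/
def IsLinfModHom (μ : Measure Ω) {E S : Type} [AddCommGroup E] [Module (Linf μ) E]
    [AddCommGroup S] [Module (Ω →ₘ[μ] ℝ) S] (T : E → S) : Prop :=
  (∀ x y, T (x + y) = T x + T y) ∧
  (∀ (ξ : Linf μ) (x : E), T (ξ • x) = ((ξ : Ω →ₘ[μ] ℝ)) • T x)

/-- `S` together with `T` is an `L⁰`-extension of the `L^∞`-normed module `(E, n)`:
`S` is a complete random normed module, `T` is a norm-preserving `L^∞`-module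
homomorphism with dense range. -/
def IsL0Extension (μ : Measure Ω) {E : Type} [AddCommGroup E] [Module (Linf μ) E]
    (n : E → Ω →ₘ[μ] ℝ) (S : RNMod Ω μ) (T : E → S.carrier) : Prop :=
  S.Complete ∧ IsLinfModHom μ T ∧ (∀ x, S.rnorm (T x) = n x) ∧
  (∀ y : S.carrier, ∀ ε > (0:ℝ), ∃ x : E, S.dist (T x) y < ε)

/-- the set of elements of an `L⁰`-normed module with essentially bounded norm. -/
def LinfPart (μ : Measure Ω) {S : Type} (n : S → Ω →ₘ[μ] ℝ) : Set S := {x | n x ∈ Linf μ}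

/-- convergence in probability of a sequence of random variables. -/
def TendstoInProb (μ : Measure Ω) (ξ : ℕ → Ω →ₘ[μ] ℝ) (l : Ω →ₘ[μ] ℝ) : Prop :=
  Tendsto (fun k => dProb μ (ξ k) l) atTop (nhds 0)

/-- the countable concatenation hull `H⁰_cc(E)` of a subset `E` of a random normed module. -/
def Hcc (S : RNMod Ω μ) (E : Set S.carrier) : Set S.carrier :=
  {z | ∃ (x : ℕ → S.carrier) (P : MPartition Ω),
    (∀ k, x k ∈ E) ∧ ∀ k, P.ind μ k • z = P.ind μ k • x k}

/-- `L(E) = L⁰ * E`, the set of `L⁰`-multiples of elements of `E`. -/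
def Lgen (S : RNMod Ω μ) (E : Set S.carrier) : Set S.carrier :=
  {z | ∃ (ξ : Ω →ₘ[μ] ℝ) (x : S.carrier), x ∈ E ∧ z = ξ • x}

/-- `f` is a continuous `L^∞`-module homomorphism from `(E, n)` to `L^∞`, i.e. a member of
the dual `L^∞`-normed module `E′`. -/
def IsLinfDual (μ : Measure Ω) {E : Type} [AddCommGroup E] [Module (Linf μ) E]
    (n : E → Ω →ₘ[μ] ℝ) (f : E → Ω →ₘ[μ] ℝ) : Prop :=
  (∀ x, f x ∈ Linf μ) ∧ (∀ x y, f (x + y) = f x + f y) ∧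
  (∀ (ξ : Linf μ) (x : E), f (ξ • x) = (ξ : Ω →ₘ[μ] ℝ) * f x) ∧
  (∀ ε > (0:ℝ), ∃ δ > (0:ℝ), ∀ x, NinfV μ (n x) < δ → NinfV μ (f x) < ε)

/-- `g` is a continuous `L⁰`-module homomorphism from `S` to `L⁰`, i.e. a member of the
random conjugate space `S^*`. -/
def IsRNDual (μ : Measure Ω) (S : RNMod Ω μ) (g : S.carrier → Ω →ₘ[μ] ℝ) : Prop :=
  (∀ x y, g (x + y) = g x + g y) ∧ (∀ (ξ : Ω →ₘ[μ] ℝ) x, g (ξ • x) = ξ * g x) ∧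
  (∀ ε > (0:ℝ), ∃ δ > (0:ℝ), ∀ x, ndist μ S.rnorm x 0 < δ → dProb μ (g x) 0 < ε)

/-- the set `{|f(x)| : ‖x‖ ≤ 1}` whose supremum in the lattice `L⁰` is the dual norm `‖f‖′`. -/
def dualBall {X : Type} (n : X → Ω →ₘ[μ] ℝ) (f : X → Ω →ₘ[μ] ℝ) : Set (Ω →ₘ[μ] ℝ) :=
  {t | ∃ x, n x ≤ 1 ∧ t = |f x|}

/-!
An element of `T(E)` has essentially bounded norm because `T` is isometric. Conversely, scale
`z ∈ E₀` so that `‖z‖₀ ≤ 1/2`. By density some `T xⱼ` tend to `z` in probability, so almost every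
`ω` has a `j` with `‖z - T xⱼ‖₀(ω) < ε`; cutting `xⱼ` down to the piece `Aⱼ` of the resulting
partition puts it in `U(E)`, and the countable concatenation property glues these pieces (their
concatenation exists in the complete module `E₀`) into some `y ∈ U(E)` with `‖z - T y‖₀ ≤ ε`.
So `z` lies in the ess-sup closure of `T(E)`, which is `T(E)` itself because `E` is complete.
-/

theorem indL0_coeFn (A : Set Ω) (hA : MeasurableSet A) :
    ⇑(indL0 μ A hA) =ᵐ[μ] A.indicator 1 :=
  AEEqFun.coeFn_mk _ _

theorem abs_indL0_mul_coeFn (A : Set Ω) (hA : MeasurableSet A) (a : Ω →ₘ[μ] ℝ) :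
    ⇑(|indL0 μ A hA| * a) =ᵐ[μ] A.indicator a := by
  filter_upwards [AEEqFun.coeFn_mul |indL0 μ A hA| a, AEEqFun.coeFn_abs (indL0 μ A hA),
    indL0_coeFn A hA] with ω hmul habs hind
  rw [hmul, Pi.mul_apply, habs, hind]
  by_cases hω : ω ∈ A <;> simp [hω]

theorem indL0_mul_of_subset {A B : Set Ω} (hA : MeasurableSet A) (hB : MeasurableSet B)
    (hAB : A ⊆ B) : indL0 μ B hB * indL0 μ A hA = indL0 μ A hA := by
  refine AEEqFun.ext ?_
  filter_upwards [AEEqFun.coeFn_mul (indL0 μ B hB) (indL0 μ A hA), indL0_coeFn A hA,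
    indL0_coeFn B hB] with ω hmul hindA hindB
  rw [hmul, Pi.mul_apply, hindA, hindB]
  by_cases hω : ω ∈ A
  · simp [hω, hAB hω]
  · simp [hω]

theorem indL0_mul_of_disjoint {A B : Set Ω} (hA : MeasurableSet A) (hB : MeasurableSet B)
    (hAB : Disjoint A B) : indL0 μ A hA * indL0 μ B hB = 0 := by
  refine AEEqFun.ext ?_
  filter_upwards [AEEqFun.coeFn_mul (indL0 μ A hA) (indL0 μ B hB), indL0_coeFn A hA,
    indL0_coeFn B hB, AEEqFun.coeFn_zero (β := ℝ) (μ := μ)] with ω hmul hindA hindB hzero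
  rw [hmul, Pi.mul_apply, hindA, hindB, hzero]
  by_cases hω : ω ∈ A <;> simp [hω, Set.disjoint_left.mp hAB]

theorem indL0_mem_Linf (A : Set Ω) (hA : MeasurableSet A) : indL0 μ A hA ∈ Linf μ :=
  ⟨1, by
    filter_upwards [indL0_coeFn A hA] with ω hω
    rw [hω]
    by_cases h : ω ∈ A <;> simp [h]⟩

theorem const_mul_const (a b : ℝ) :
    (AEEqFun.const Ω a : Ω →ₘ[μ] ℝ) * AEEqFun.const Ω b = AEEqFun.const Ω (a * b) := rfl

theorem abs_const (a : ℝ) :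
    |(AEEqFun.const Ω a : Ω →ₘ[μ] ℝ)| = AEEqFun.const Ω |a| := rfl

theorem coe_LinfConst (c : ℝ) : (LinfConst μ c : Ω →ₘ[μ] ℝ) = AEEqFun.const Ω c := rfl

theorem const_one : (AEEqFun.const Ω 1 : Ω →ₘ[μ] ℝ) = 1 := rfl

/-- The F-norm `E[1 ∧ |ξ|]` metrizing convergence in probability; `ndist μ n x y` is
`probNorm μ (n (x - y))`. -/
def probNorm (μ : Measure Ω) (ξ : Ω →ₘ[μ] ℝ) : ℝ := ∫ ω, min 1 |ξ ω| ∂μ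

theorem integrable_min_one_abs [IsFiniteMeasure μ] (ξ : Ω →ₘ[μ] ℝ) :
    Integrable (fun ω => min 1 |ξ ω|) μ := by
  refine (integrable_const (1 : ℝ)).mono'
    (measurable_const.min (AEEqFun.measurable ξ).abs).aestronglyMeasurable
    (.of_forall fun ω => ?_)
  rw [Real.norm_of_nonneg (le_min zero_le_one (abs_nonneg _))]
  exact min_le_left _ _

theorem probNorm_nonneg (ξ : Ω →ₘ[μ] ℝ) : 0 ≤ probNorm μ ξ :=
  integral_nonneg fun _ => le_min zero_le_one (abs_nonneg _)

theorem probNorm_mono [IsFiniteMeasure μ] {ξ η : Ω →ₘ[μ] ℝ} (h : ∀ᵐ ω ∂μ, |ξ ω| ≤ |η ω|) :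
    probNorm μ ξ ≤ probNorm μ η :=
  integral_mono_ae (integrable_min_one_abs ξ) (integrable_min_one_abs η)
    (h.mono fun _ hω => min_le_min le_rfl hω)

theorem probNorm_le_measureReal [IsFiniteMeasure μ] {ξ : Ω →ₘ[μ] ℝ} {U : Set Ω}
    (hU : MeasurableSet U) (h : ∀ᵐ ω ∂μ, ω ∉ U → ξ ω = 0) : probNorm μ ξ ≤ μ.real U := by
  rw [← integral_indicator_one hU]
  refine integral_mono_ae (integrable_min_one_abs ξ) ((integrable_const 1).indicator hU) ?_
  filter_upwards [h] with ω hω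
  by_cases hωU : ω ∈ U
  · simp [hωU]
  · simp [hωU, hω hωU]

theorem eq_zero_of_probNorm_le_zero [IsFiniteMeasure μ] {ξ : Ω →ₘ[μ] ℝ}
    (h : probNorm μ ξ ≤ 0) : ξ = 0 := by
  have hzero := (integral_eq_zero_iff_of_nonneg
    (fun _ => le_min zero_le_one (abs_nonneg _)) (integrable_min_one_abs ξ)).mp
    (le_antisymm h (probNorm_nonneg ξ))
  refine AEEqFun.ext ?_
  filter_upwards [hzero, AEEqFun.coeFn_zero (β := ℝ) (μ := μ)] with ω hω h0
  rw [h0]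
  exact (by simpa [min_eq_iff, abs_nonpos_iff] using hω : ξ ω = 0 ∧ _).1

/-- Markov's inequality bounds the exceptional set by `probNorm μ (ξ j) / min 1 ε` for every `j`. -/
theorem ae_exists_abs_lt_of_tendsto_probNorm [IsFiniteMeasure μ] {ξ : ℕ → Ω →ₘ[μ] ℝ}
    (hξ : Tendsto (fun j => probNorm μ (ξ j)) atTop (nhds 0)) {ε : ℝ} (hε : 0 < ε) :
    ∀ᵐ ω ∂μ, ∃ j, |ξ j ω| < ε := by
  set δ := min 1 ε
  have hδ : 0 < δ := lt_min one_pos hε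
  have hbad : ∀ j, μ.real {ω | ¬∃ j, |ξ j ω| < ε} ≤ probNorm μ (ξ j) / δ := by
    intro j
    rw [le_div_iff₀' hδ]
    refine le_trans ?_ (mul_meas_ge_le_integral_of_nonneg
      (.of_forall fun _ => le_min zero_le_one (abs_nonneg _)) (integrable_min_one_abs _) δ)
    refine mul_le_mul_of_nonneg_left (measureReal_mono fun ω hω => ?_) hδ.le
    exact min_le_min le_rfl (not_lt.mp (not_exists.mp hω j))
  have hlim : Tendsto (fun j => probNorm μ (ξ j) / δ) atTop (nhds 0) := by
    simpa using hξ.div_const δ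
  rw [ae_iff, ← measureReal_eq_zero_iff]
  exact le_antisymm (ge_of_tendsto' hlim hbad) measureReal_nonneg

namespace MPartition

theorem pairwise_disjoint (P : MPartition Ω) : Pairwise fun i j => Disjoint (P.A i) (P.A j) :=
  fun _ _ h => Set.disjoint_iff_inter_eq_empty.mpr (P.disj _ _ h)

theorem ae_of_forall (P : MPartition Ω) {p : Ω → Prop}
    (h : ∀ j, ∀ᵐ ω ∂μ, ω ∈ P.A j → p ω) : ∀ᵐ ω ∂μ, p ω := by
  filter_upwards [ae_all_iff.mpr h] with ω hω
  obtain ⟨j, hj⟩ := Set.mem_iUnion.mp (P.cover ▸ Set.mem_univ ω)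
  exact hω j hj

/-- Disjointing `B j ∪ (⋃ i, B i)ᶜ` gives a partition that refines `B` up to the null set
`(⋃ i, B i)ᶜ`. -/
theorem exists_ae_subset {B : ℕ → Set Ω} (hB : ∀ j, MeasurableSet (B j))
    (hcov : ∀ᵐ ω ∂μ, ∃ j, ω ∈ B j) :
    ∃ P : MPartition Ω, ∀ j, ∀ᵐ ω ∂μ, ω ∈ P.A j → ω ∈ B j := by
  set B' : ℕ → Set Ω := fun j => B j ∪ (⋃ i, B i)ᶜ
  have hcover : (⋃ j, disjointed B' j) = Set.univ := by
    rw [iUnion_disjointed, Set.eq_univ_iff_forall]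
    intro ω
    by_cases hω : ω ∈ ⋃ i, B i
    · obtain ⟨i, hi⟩ := Set.mem_iUnion.mp hω
      exact Set.mem_iUnion.mpr ⟨i, Or.inl hi⟩
    · exact Set.mem_iUnion.mpr ⟨0, Or.inr hω⟩
  refine ⟨⟨disjointed B', MeasurableSet.disjointed fun j => (hB j).union
      (MeasurableSet.iUnion hB).compl, fun _ _ h => Set.disjoint_iff_inter_eq_empty.mp
      (disjoint_disjointed B' h), hcover⟩, fun j => ?_⟩
  filter_upwards [hcov] with ω ⟨i, hi⟩ hω
  rcases disjointed_subset B' j hω with h | h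
  · exact h
  · exact absurd (Set.mem_iUnion.mpr ⟨i, hi⟩) h

end MPartition

namespace RNMod

variable (S : RNMod Ω μ)

theorem rnorm_nonneg_ae (v : S.carrier) : ∀ᵐ ω ∂μ, 0 ≤ S.rnorm v ω := by
  filter_upwards [AEEqFun.coeFn_le.mpr (S.isRNNorm.nonneg v),
    AEEqFun.coeFn_zero (β := ℝ) (μ := μ)] with ω hω hzero
  rwa [hzero] at hω

theorem rnorm_neg (v : S.carrier) : S.rnorm (-v) = S.rnorm v := by
  rw [← neg_one_smul (Ω →ₘ[μ] ℝ) v, S.isRNNorm.norm_smul,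
    show (-1 : Ω →ₘ[μ] ℝ) = AEEqFun.const Ω (-1) from rfl, abs_const, abs_neg, abs_one, const_one,
    one_mul]

theorem rnorm_sub_comm (u v : S.carrier) : S.rnorm (u - v) = S.rnorm (v - u) := by
  rw [← S.rnorm_neg, neg_sub]

theorem dist_comm (u v : S.carrier) : S.dist u v = S.dist v u := by
  simp only [RNMod.dist, ndist, S.rnorm_sub_comm u v]

theorem rnorm_sub_le_ae (u v w : S.carrier) :
    ∀ᵐ ω ∂μ, S.rnorm (u - w) ω ≤ S.rnorm (u - v) ω + S.rnorm (v - w) ω := by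
  have htri := S.isRNNorm.norm_add_le (u - v) (v - w)
  rw [sub_add_sub_cancel] at htri
  filter_upwards [AEEqFun.coeFn_le.mpr htri,
    AEEqFun.coeFn_add (S.rnorm (u - v)) (S.rnorm (v - w))] with ω hω hadd
  rwa [hadd] at hω

theorem rnorm_const_smul_coeFn (a : ℝ) (v : S.carrier) :
    ⇑(S.rnorm ((AEEqFun.const Ω a : Ω →ₘ[μ] ℝ) • v)) =ᵐ[μ] fun ω => |a| * S.rnorm v ω := by
  rw [S.isRNNorm.norm_smul, abs_const]
  filter_upwards [AEEqFun.coeFn_mul (AEEqFun.const Ω |a|) (S.rnorm v),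
    AEEqFun.coeFn_const (α := Ω) (μ := μ) |a|] with ω hmul hconst
  rw [hmul, Pi.mul_apply, hconst, Function.const_apply]

theorem rnorm_indL0_smul (A : Set Ω) (hA : MeasurableSet A) (v : S.carrier) :
    ⇑(S.rnorm (indL0 μ A hA • v)) =ᵐ[μ] A.indicator (S.rnorm v) := by
  rw [S.isRNNorm.norm_smul]
  exact abs_indL0_mul_coeFn A hA _

theorem ae_rnorm_eq_of_indL0_smul_eq {A : Set Ω} (hA : MeasurableSet A) {u v : S.carrier}
    (h : indL0 μ A hA • u = indL0 μ A hA • v) :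
    ∀ᵐ ω ∂μ, ω ∈ A → S.rnorm u ω = S.rnorm v ω := by
  filter_upwards [S.rnorm_indL0_smul A hA u, S.rnorm_indL0_smul A hA v] with ω hu hv hω
  rw [← Set.indicator_of_mem hω (S.rnorm u), ← Set.indicator_of_mem hω (S.rnorm v), ← hu, ← hv, h]

theorem ae_rnorm_eq_zero_of_indL0_smul_eq_self {A : Set Ω} (hA : MeasurableSet A)
    {v : S.carrier} (h : indL0 μ A hA • v = v) : ∀ᵐ ω ∂μ, ω ∉ A → S.rnorm v ω = 0 := by
  filter_upwards [S.rnorm_indL0_smul A hA v] with ω hv hω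
  rw [← h, hv, Set.indicator_of_notMem hω]

theorem eq_of_ae_rnorm_sub_le {u v : S.carrier} {c : ℕ → ℝ}
    (hc : Tendsto c atTop (nhds 0)) (h : ∀ k, ∀ᵐ ω ∂μ, S.rnorm (u - v) ω ≤ c k) : u = v := by
  refine sub_eq_zero.mp ((S.isRNNorm.eq_zero_iff _).mp (AEEqFun.ext ?_))
  filter_upwards [ae_all_iff.mpr h, S.rnorm_nonneg_ae (u - v),
    AEEqFun.coeFn_zero (β := ℝ) (μ := μ)] with ω hle hnonneg hzero
  rw [hzero]
  exact le_antisymm (ge_of_tendsto' hc hle) hnonneg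

theorem indL0_smul_eq_of_dTendsto [IsFiniteMeasure μ] {A : Set Ω} (hA : MeasurableSet A)
    {s : ℕ → S.carrier} {z v : S.carrier} (hz : dTendsto S.dist s z)
    (hs : ∀ᶠ m in atTop, indL0 μ A hA • s m = indL0 μ A hA • v) :
    indL0 μ A hA • z = indL0 μ A hA • v := by
  have hle : ∀ᶠ m in atTop, probNorm μ (S.rnorm (indL0 μ A hA • z - indL0 μ A hA • v)) ≤
      S.dist (s m) z := by
    filter_upwards [hs] with m hm
    rw [← hm, ← smul_sub]
    refine probNorm_mono ?_
    filter_upwards [S.rnorm_indL0_smul A hA (z - s m)] with ω hω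
    rw [hω, S.rnorm_sub_comm]
    simpa only [Real.norm_eq_abs] using norm_indicator_le_norm_self (s := A) (S.rnorm _) ω
  exact sub_eq_zero.mp ((S.isRNNorm.eq_zero_iff _).mp
    (eq_zero_of_probNorm_le_zero (ge_of_tendsto hz hle)))

end RNMod

theorem dCauchy_of_le_add {X : Type} {d : X → X → ℝ} {x : ℕ → X} {c : ℕ → ℝ}
    (hc : Tendsto c atTop (nhds 0)) (h : ∀ m k, d (x m) (x k) ≤ c m + c k) : dCauchy d x := by
  intro ε hε
  obtain ⟨N, hN⟩ := eventually_atTop.mp (hc.eventually (gt_mem_nhds (half_pos hε)))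
  exact ⟨N, fun m hm k hk => (h m k).trans_lt (by linarith [hN m hm, hN k hk])⟩

/-- The partial sums `∑_{j<m} Ĩ_{A_j} v_j` differ from each other only on the tails
`⋃_{j ≥ k} A_j`, whose measures tend to zero. -/
theorem RNMod.exists_concat [IsFiniteMeasure μ] (S : RNMod Ω μ) (hS : S.Complete)
    (P : MPartition Ω) (v : ℕ → S.carrier) : ∃ z, ∀ j, P.ind μ j • z = P.ind μ j • v j := by
  set s : ℕ → S.carrier := fun m => ∑ j ∈ Finset.range m, P.ind μ j • v j
  set U : ℕ → Set Ω := fun k => ⋃ j ≥ k, P.A j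
  have hU : ∀ k, MeasurableSet (U k) := fun k => MeasurableSet.biUnion (Set.to_countable _)
    fun j _ => P.meas j
  have hUlim : Tendsto (fun k => μ.real (U k)) atTop (nhds 0) :=
    (ENNReal.tendsto_toReal ENNReal.zero_ne_top).comp
      (tendsto_measure_biUnion_Ici_zero_of_pairwise_disjoint
        (fun j => (P.meas j).nullMeasurableSet) P.pairwise_disjoint)
  have hdist : ∀ k m, k ≤ m → S.dist (s m) (s k) ≤ μ.real (U k) := by
    intro k m hkm
    have hsupp : indL0 μ (U k) (hU k) • (s m - s k) = s m - s k := by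
      simp only [s, ← Finset.sum_Ico_eq_sub _ hkm, Finset.smul_sum, smul_smul]
      refine Finset.sum_congr rfl fun j hj => ?_
      rw [MPartition.ind, indL0_mul_of_subset (P.meas j) (hU k)
        (Set.subset_biUnion_of_mem (u := P.A) (Finset.mem_Ico.mp hj).1)]
    exact probNorm_le_measureReal (hU k) (S.ae_rnorm_eq_zero_of_indL0_smul_eq_self (hU k) hsupp)
  have hcauchy : dCauchy S.dist s := dCauchy_of_le_add hUlim fun m k => by
    rcases le_total k m with h | h
    · exact (hdist k m h).trans (le_add_of_nonneg_left measureReal_nonneg)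
    · rw [S.dist_comm]
      exact (hdist m k h).trans (le_add_of_nonneg_right measureReal_nonneg)
  obtain ⟨z, hz⟩ := hS s hcauchy
  refine ⟨z, fun j => S.indL0_smul_eq_of_dTendsto (P.meas j) hz
    (eventually_atTop.mpr ⟨j + 1, fun m hm => ?_⟩)⟩
  simp only [s, MPartition.ind, Finset.smul_sum, smul_smul]
  rw [Finset.sum_eq_single j
      (fun i _ hij => by rw [indL0_mul_of_disjoint _ _ (P.pairwise_disjoint hij.symm), zero_smul])
      (fun hj => absurd (Finset.mem_range.mpr hm) hj), indL0_mul_of_subset _ _ subset_rfl]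

theorem exists_partition_ae_rnorm_sub_lt [IsFiniteMeasure μ] {S : RNMod Ω μ} {X : Type}
    {T : X → S.carrier} (hdense : ∀ y : S.carrier, ∀ ε > (0 : ℝ), ∃ x, S.dist (T x) y < ε)
    (z : S.carrier) {ε : ℝ} (hε : 0 < ε) :
    ∃ (x : ℕ → X) (P : MPartition Ω), ∀ j, ∀ᵐ ω ∂μ, ω ∈ P.A j → S.rnorm (z - T (x j)) ω < ε := by
  choose x hx using fun j : ℕ => hdense z (1 / (j + 1)) Nat.one_div_pos_of_nat
  have hxlim : Tendsto (fun j => probNorm μ (S.rnorm (T (x j) - z))) atTop (nhds 0) :=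
    squeeze_zero (fun _ => probNorm_nonneg _) (fun j => (hx j).le)
      tendsto_one_div_add_atTop_nhds_zero_nat
  obtain ⟨P, hP⟩ := MPartition.exists_ae_subset
    (fun j => measurableSet_lt (AEEqFun.measurable (S.rnorm (T (x j) - z))).abs measurable_const)
    (ae_exists_abs_lt_of_tendsto_probNorm hxlim hε)
  refine ⟨x, P, fun j => ?_⟩
  filter_upwards [hP j] with ω hB hω
  rw [S.rnorm_sub_comm]
  exact (le_abs_self _).trans_lt (hB hω)

theorem IsLinfModHom.map_sub {E S : Type} [AddCommGroup E] [Module (Linf μ) E]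
    [AddCommGroup S] [Module (Ω →ₘ[μ] ℝ) S] {T : E → S} (hT : IsLinfModHom μ T) (x y : E) :
    T (x - y) = T x - T y :=
  (AddMonoidHom.mk' T hT.1).map_sub x y

theorem ninfV_le_of_ae_abs_le [NeZero μ] {ξ : Ω →ₘ[μ] ℝ} {c : ℝ} (h : ∀ᵐ ω ∂μ, |ξ ω| ≤ c) :
    NinfV μ ξ ≤ c :=
  essSup_le_of_ae_le c h (IsCoboundedUnder.of_frequently_ge
    (Eventually.of_forall (fun ω => abs_nonneg (ξ ω)) |>.frequently))

theorem ae_abs_le_ninfV {ξ : Ω →ₘ[μ] ℝ} (h : ξ ∈ Linf μ) : ∀ᵐ ω ∂μ, |ξ ω| ≤ NinfV μ ξ :=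
  let ⟨c, hc⟩ := h
  ae_le_essSup ⟨c, eventually_map.mpr hc⟩

section Extension

variable {E : Type} [AddCommGroup E] [Module (Linf μ) E] {n : E → Ω →ₘ[μ] ℝ}
  {S : RNMod Ω μ} {T : E → S.carrier}

theorem mem_range_of_forall_ae_rnorm_sub_le [NeZero μ] (hn : ∀ x, n x ∈ Linf μ)
    (hcomp : dComplete (fun x y : E => NinfV μ (n (x - y))))
    (hT : IsLinfModHom μ T) (hTn : ∀ x, S.rnorm (T x) = n x) {z : S.carrier}
    (hz : ∀ ε > 0, ∃ y : E, ∀ᵐ ω ∂μ, S.rnorm (z - T y) ω ≤ ε) : z ∈ Set.range T := by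
  choose y hy using fun k : ℕ => hz (1 / (k + 1)) Nat.one_div_pos_of_nat
  have hlim : Tendsto (fun k : ℕ => 1 / ((k : ℝ) + 1)) atTop (nhds 0) :=
    tendsto_one_div_add_atTop_nhds_zero_nat
  have hcauchy : dCauchy (fun x y : E => NinfV μ (n (x - y))) y := by
    refine dCauchy_of_le_add hlim fun m k => ninfV_le_of_ae_abs_le ?_
    filter_upwards [S.rnorm_sub_le_ae (T (y m)) z (T (y k)), hy m, hy k,
      S.rnorm_nonneg_ae (T (y m) - T (y k))] with ω htri hm hk h0
    rw [S.rnorm_sub_comm (T (y m)) z] at htri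
    rw [← hTn, hT.map_sub, abs_of_nonneg h0]
    linarith
  obtain ⟨yl, hyl⟩ := hcomp y hcauchy
  have hbound :
      Tendsto (fun k : ℕ => 1 / ((k : ℝ) + 1) + NinfV μ (n (y k - yl))) atTop (nhds 0) := by
    simpa only [add_zero] using hlim.add hyl
  refine ⟨yl, (S.eq_of_ae_rnorm_sub_le hbound fun k => ?_).symm⟩
  filter_upwards [S.rnorm_sub_le_ae z (T (y k)) (T yl), hy k, ae_abs_le_ninfV (hn (y k - yl))]
    with ω htri hk hninf
  rw [← hT.map_sub, hTn] at htri
  linarith [le_abs_self (n (y k - yl) ω)]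

theorem exists_ae_rnorm_sub_le_of_ccp [IsFiniteMeasure μ] (hext : IsL0Extension μ n S T)
    (hccp : ∀ (x : ℕ → E), (∀ k, n (x k) ≤ 1) → ∀ (P : MPartition Ω) (z : S.carrier),
      (∀ k, P.ind μ k • z = P.ind μ k • T (x k)) → ∃ y : E, n y ≤ 1 ∧ T y = z)
    {z : S.carrier} {r ε : ℝ} (hz : ∀ᵐ ω ∂μ, S.rnorm z ω ≤ r) (hε : 0 < ε) (hrε : r + ε ≤ 1) :
    ∃ y : E, ∀ᵐ ω ∂μ, S.rnorm (z - T y) ω ≤ ε := by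
  obtain ⟨hS, hT, hTn, hdense⟩ := hext
  obtain ⟨x, P, hclose⟩ := exists_partition_ae_rnorm_sub_lt hdense z hε
  set w : ℕ → E := fun j => (⟨P.ind μ j, indL0_mem_Linf _ _⟩ : Linf μ) • x j
  have hTw : ∀ j, T (w j) = P.ind μ j • T (x j) := fun j => hT.2 _ _
  have hw : ∀ j, n (w j) ≤ 1 := by
    intro j
    rw [← hTn, hTw, ← AEEqFun.coeFn_le]
    filter_upwards [S.rnorm_indL0_smul _ (P.meas j) (T (x j)), hclose j, hz,
      S.rnorm_sub_le_ae (T (x j)) z 0, S.rnorm_nonneg_ae (T (x j)),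
      AEEqFun.coeFn_one (β := ℝ) (μ := μ)] with ω hind hωclose hωz htri hnonneg hone
    rw [sub_zero, sub_zero, S.rnorm_sub_comm] at htri
    rw [MPartition.ind, hind, hone, Pi.one_apply]
    by_cases hω : ω ∈ P.A j
    · rw [Set.indicator_of_mem hω]
      linarith [hωclose hω]
    · rw [Set.indicator_of_notMem hω]
      exact zero_le_one
  obtain ⟨zt, hzt⟩ := S.exists_concat hS P (T ∘ x)
  obtain ⟨y, -, hy⟩ := hccp w hw P zt fun j => by
    rw [hzt j, hTw, smul_smul, MPartition.ind, indL0_mul_of_subset _ _ subset_rfl]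
    rfl
  refine ⟨y, P.ae_of_forall fun j => ?_⟩
  have hpiece : P.ind μ j • (z - T y) = P.ind μ j • (z - T (x j)) := by
    rw [smul_sub, smul_sub, hy, hzt j]
    rfl
  filter_upwards [S.ae_rnorm_eq_of_indL0_smul_eq (P.meas j) hpiece, hclose j] with ω heq hω hA
  rw [heq hA]
  exact (hω hA).le

end Extension

/-- if `(E,‖·‖)` is a complete `L^∞`-normed module whose unit ball has
the countable concatenation property, then `E = L^∞(E₀)`, i.e. the image of `E` in
its `L⁰`-extension `E₀` is exactly the set of elements with essentially bounded norm. -/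
theorem complete_ccp_eq_LinfPart
    {Ω : Type} [MeasurableSpace Ω] (μ : Measure Ω) [IsProbabilityMeasure μ]
    {E : Type} [AddCommGroup E] [Module (Linf μ) E]
    (n : E → Ω →ₘ[μ] ℝ) (hn : IsLinfNorm μ n)
    (hcomp : dComplete (fun x y : E => NinfV μ (n (x - y))))
    (S : RNMod Ω μ) (T : E → S.carrier) (hext : IsL0Extension μ n S T)
    (hccp : ∀ (x : ℕ → E), (∀ k, n (x k) ≤ 1) → ∀ (P : MPartition Ω) (z : S.carrier),
      (∀ k, P.ind μ k • z = P.ind μ k • T (x k)) → ∃ y : E, n y ≤ 1 ∧ T y = z) :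
    Set.range T = LinfPart μ S.rnorm := by
  refine Set.Subset.antisymm ?_ ?_
  · rintro _ ⟨x, rfl⟩
    exact (hext.2.2.1 x ▸ hn.mem_Linf x : S.rnorm (T x) ∈ Linf μ)
  rintro z ⟨c, hc⟩
  set K : ℝ := 2 * |c| + 1
  have hK : 0 < K := by positivity
  have hz : ∀ᵐ ω ∂μ, S.rnorm ((AEEqFun.const Ω K⁻¹ : Ω →ₘ[μ] ℝ) • z) ω ≤ 1 / 2 := by
    filter_upwards [S.rnorm_const_smul_coeFn K⁻¹ z, hc] with ω hω hcω
    rw [hω, abs_of_pos (inv_pos.mpr hK), inv_mul_le_iff₀ hK]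
    linarith [le_abs_self (S.rnorm z ω), le_abs_self c]
  have happrox : ∀ ε > 0, ∃ y : E,
      ∀ᵐ ω ∂μ, S.rnorm ((AEEqFun.const Ω K⁻¹ : Ω →ₘ[μ] ℝ) • z - T y) ω ≤ ε := by
    intro ε hε
    obtain ⟨y, hy⟩ := exists_ae_rnorm_sub_le_of_ccp hext hccp hz (lt_min hε one_half_pos)
      (by linarith [min_le_right ε (1 / 2)])
    exact ⟨y, hy.mono fun _ h => h.trans (min_le_left _ _)⟩
  obtain ⟨y, hy⟩ :=
    mem_range_of_forall_ae_rnorm_sub_le hn.mem_Linf hcomp hext.2.1 hext.2.2.1 happrox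
  refine ⟨LinfConst μ K • y, ?_⟩
  rw [hext.2.1.2, hy, smul_smul, coe_LinfConst, const_mul_const, mul_inv_cancel₀ hK.ne',
    const_one, one_smul]

end
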